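/- arXiv:2106.12276 — 2 statements merged into one kernel-verified Lean document; each statement's English description precedes it below -/
import Mathlib

section
/- Let k > 0, λ > 0 and x > 0. If x is a critical point of f_{k,λ}, i.e. the derivative of f_{k,λ} at x is zero, then √(λx) · I'_{(k−2)/2}(√(λx)) = (x − (k−2)/2) · I_{(k−2)/2}(√(λx)), where I'_ν denotes the derivative of the function I_ν. -/
/-!
Writing `I_ν(y) = (y/2)^ν g((y/2)^2)` with `g(z) = ∑ z^m / (m! Γ(m+ν+1))` entire (ratio test),
`I_ν` is differentiable on `(0, ∞)`. By the product rule the derivative of the density is a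
positive factor times `(k - 2 - 2x) I_ν(√(λx)) + 2 √(λx) I_ν'(√(λx))`, which therefore vanishes
at a critical point.
-/

open Real

/-- Modified Bessel function of the first kind, defined by its power series. -/
noncomputable def besselI (ν : ℝ) (x : ℝ) : ℝ :=
  ∑' m : ℕ, (x / 2) ^ (2 * (m : ℝ) + ν) / ((Nat.factorial m : ℝ) * Real.Gamma ((m : ℝ) + ν + 1))

/-- PDF of the non-central chi-squared distribution with `k` degrees of freedom
and non-centrality `lam`. -/
noncomputable def ncchi (k lam x : ℝ) : ℝ :=
  1 / 2 * Real.exp (-(x + lam) / 2) * (x / lam) ^ ((k - 2) / 4) *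
    besselI ((k - 2) / 2) (Real.sqrt (lam * x))

open Filter FormalMultilinearSeries

theorem FormalMultilinearSeries.differentiable_ofScalarsSum {𝕜 E : Type*}
    [NontriviallyNormedField 𝕜] [NormedRing E] [NormedAlgebra 𝕜 E] [CompleteSpace E]
    {c : ℕ → 𝕜} (hc : (ofScalars E c).radius = ⊤) :
    Differentiable 𝕜 (ofScalarsSum (E := E) c) := by
  have h := ((ofScalars E c).hasFPowerSeriesOnBall (hc ▸ ENNReal.zero_lt_top)).differentiableOn
  rwa [hc, Metric.eball_top, differentiableOn_univ] at h

noncomputable def besselCoeff (ν : ℝ) (m : ℕ) : ℝ :=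
  ((Nat.factorial m : ℝ) * Real.Gamma ((m : ℝ) + ν + 1))⁻¹

lemma besselCoeff_pos {ν : ℝ} (hν : -1 < ν) (m : ℕ) : 0 < besselCoeff ν m := by
  have hΓ := Real.Gamma_pos_of_pos (show 0 < (m : ℝ) + ν + 1 by linarith [m.cast_nonneg (α := ℝ)])
  unfold besselCoeff; positivity

lemma besselCoeff_succ {ν : ℝ} (hν : -1 < ν) (m : ℕ) :
    besselCoeff ν (m + 1) = besselCoeff ν m * (((m : ℝ) + 1) * ((m : ℝ) + ν + 1))⁻¹ := by
  have hpos : (m : ℝ) + ν + 1 ≠ 0 := by linarith [m.cast_nonneg (α := ℝ)]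
  simp only [besselCoeff, Nat.factorial_succ, Nat.cast_mul, Nat.cast_add_one,
    add_right_comm (m : ℝ) 1 ν, Real.Gamma_add_one hpos, mul_inv]
  ring

lemma radius_ofScalars_besselCoeff {ν : ℝ} (hν : -1 < ν) :
    (ofScalars ℝ (besselCoeff ν)).radius = ⊤ := by
  refine ofScalars_radius_eq_top_of_tendsto _ _
    (Eventually.of_forall fun m => (besselCoeff_pos hν m).ne') ?_
  have hratio : ∀ m : ℕ, ‖besselCoeff ν (m + 1)‖ / ‖besselCoeff ν m‖
      = (((m : ℝ) + 1) * ((m : ℝ) + ν + 1))⁻¹ := fun m => by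
    have hpos : 0 ≤ ((m : ℝ) + 1) * ((m : ℝ) + ν + 1) := by
      have : (0 : ℝ) ≤ m := m.cast_nonneg
      exact mul_nonneg (by linarith) (by linarith)
    rw [besselCoeff_succ hν, norm_mul, mul_div_cancel_left₀ _ (norm_ne_zero_iff.2
      (besselCoeff_pos hν m).ne'), norm_inv, Real.norm_of_nonneg hpos]
  simp only [Nat.succ_eq_add_one, hratio]
  have hlin : ∀ a : ℝ, Tendsto (fun m : ℕ => (m : ℝ) + a) atTop atTop := fun a =>
    tendsto_atTop_add_const_right _ a tendsto_natCast_atTop_atTop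
  simpa only [add_assoc, Pi.inv_def] using
    ((hlin 1).atTop_mul_atTop₀ (hlin (ν + 1))).inv_tendsto_atTop

theorem besselI_eq_rpow_mul_ofScalarsSum (ν : ℝ) {x : ℝ} (hx : 0 < x) :
    besselI ν x = (x / 2) ^ ν * ofScalarsSum (E := ℝ) (besselCoeff ν) ((x / 2) ^ 2) := by
  rw [ofScalars_sum_eq, ← tsum_mul_left]
  refine tsum_congr fun m => ?_
  rw [Real.rpow_add (by positivity), smul_eq_mul,
    show 2 * (m : ℝ) = ((2 * m : ℕ) : ℝ) by push_cast; rfl, Real.rpow_natCast, pow_mul, besselCoeff]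
  ring

theorem differentiableAt_besselI {ν x : ℝ} (hν : -1 < ν) (hx : 0 < x) :
    DifferentiableAt ℝ (besselI ν) x := by
  have hrepr : (fun y => (y / 2) ^ ν * ofScalarsSum (E := ℝ) (besselCoeff ν) ((y / 2) ^ 2))
      =ᶠ[nhds x] besselI ν :=
    eventually_of_mem (Ioi_mem_nhds hx) fun y hy => (besselI_eq_rpow_mul_ofScalarsSum ν hy).symm
  refine DifferentiableAt.congr_of_eventuallyEq ?_ hrepr.symm
  have := differentiable_ofScalarsSum (radius_ofScalars_besselCoeff hν)
  fun_prop (disch := positivity)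

theorem hasDerivAt_ncchi {k lam x : ℝ} (hlam : 0 < lam) (hx : 0 < x)
    (hI : DifferentiableAt ℝ (besselI ((k - 2) / 2)) (√(lam * x))) :
    HasDerivAt (ncchi k lam)
      (exp (-(x + lam) / 2) * (x / lam) ^ ((k - 2) / 4) / (8 * x) *
        ((k - 2 - 2 * x) * besselI ((k - 2) / 2) (√(lam * x)) +
          2 * √(lam * x) * deriv (besselI ((k - 2) / 2)) (√(lam * x)))) x := by
  have hlx : 0 < lam * x := by positivity
  have hsqrt : HasDerivAt (fun y => √(lam * y)) (lam / (2 * √(lam * x))) x := by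
    simpa using ((hasDerivAt_id x).const_mul lam).sqrt hlx.ne'
  have hexp : HasDerivAt (fun y => exp (-(y + lam) / 2)) (exp (-(x + lam) / 2) * (-1 / 2)) x := by
    simpa using ((((hasDerivAt_id x).add_const lam).neg).div_const 2).exp
  have hpow : HasDerivAt (fun y => (y / lam) ^ ((k - 2) / 4))
      ((k - 2) / 4 * (x / lam) ^ ((k - 2) / 4 - 1) / lam) x := by
    simpa [mul_comm, div_eq_mul_inv, mul_assoc] using
      ((hasDerivAt_id x).div_const lam).rpow_const (p := (k - 2) / 4) (Or.inl (by positivity))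
  refine (((hexp.const_mul (1 / 2)).mul hpow).mul (hI.hasDerivAt.comp x hsqrt)).congr_deriv ?_
  simp only [Function.comp_apply, Pi.mul_apply]
  rw [Real.rpow_sub_one (by positivity)]
  field_simp
  have hs : √(x * lam) ^ 2 = x * lam := Real.sq_sqrt (by positivity)
  linear_combination -32 * deriv (besselI ((k - 2) / 2)) √(x * lam) * hs

theorem stmt_1 (k lam x : ℝ) (hk : 0 < k) (hlam : 0 < lam) (hx : 0 < x)
    (hcrit : deriv (ncchi k lam) x = 0) :
    Real.sqrt (lam * x) * deriv (besselI ((k - 2) / 2)) (Real.sqrt (lam * x)) =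
      (x - (k - 2) / 2) * besselI ((k - 2) / 2) (Real.sqrt (lam * x)) := by
  have hν : -1 < (k - 2) / 2 := by linarith
  have hI := differentiableAt_besselI hν (Real.sqrt_pos.2 (mul_pos hlam hx))
  rw [(hasDerivAt_ncchi hlam hx hI).deriv] at hcrit
  have hfactor : exp (-(x + lam) / 2) * (x / lam) ^ ((k - 2) / 4) / (8 * x) ≠ 0 := by
    positivity
  linear_combination (mul_eq_zero.1 hcrit).resolve_left hfactor / 2
end

section
/- For every real k > 2 and every λ > 0, the density f_{k,λ} attains a global maximum on (0, ∞): there exists x_m > 0 such that f_{k,λ}(x_m) ≥ f_{k,λ}(x) for all x > 0. (The mode of the non-central chi-squared distribution exists whenever k > 2.) -/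
/-!
Write `ν = (k - 2) / 2`. Since `Γ(m + ν + 1) ≥ m! Γ(ν + 1)` and `(2m)! ≤ 4^m (m!)^2`, the series
of `I_ν(y)` is dominated termwise by `(y/2)^ν / Γ(ν + 1)` times the series of `cosh y`. In the
density the powers then combine to `(x/2)^ν`, and `√(λx) ≤ x/4 + λ` leaves a factor `e^{-x/4}`,
so `f(x) ≤ C (x/2)^ν e^{-x/4} → 0` as `x → ∞`. The Bessel series converges uniformly on compacts,
so `f` is continuous on `[0, ∞)`, with `f(0) = 0` because `(x/λ)^{(k-2)/4}` vanishes there, while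
`f > 0` on `(0, ∞)`. A maximum on the closed half-line therefore exists and is not at `0`.
-/

open Real

open Filter Set Topology Nat

theorem Nat.factorial_two_mul_le_four_pow_mul_sq (m : ℕ) : (2 * m)! ≤ 4 ^ m * m ! ^ 2 := by
  have h := choose_mul_factorial_mul_factorial (n := 2 * m) (k := m) (by omega)
  rw [show 2 * m - m = m by omega] at h
  rw [← h, ← centralBinom_eq_two_mul_choose, mul_assoc, ← sq]
  exact Nat.mul_le_mul_right _ (centralBinom_le_four_pow m)

theorem Real.factorial_mul_Gamma_le_Gamma {ν : ℝ} (hν : 0 ≤ ν) (m : ℕ) :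
    m ! * Gamma (ν + 1) ≤ Gamma (m + ν + 1) := by
  induction m with
  | zero => simp
  | succ n ih =>
    have hpos : 0 < (n : ℝ) + ν + 1 := by positivity
    rw [Nat.cast_succ, add_right_comm _ 1, add_right_comm _ 1, Gamma_add_one hpos.ne',
      factorial_succ, Nat.cast_mul, Nat.cast_succ, mul_assoc]
    exact mul_le_mul (by linarith) ih (by positivity) hpos.le

theorem Real.cosh_le_exp {y : ℝ} (hy : 0 ≤ y) : cosh y ≤ exp y := by
  have : exp (-y) ≤ exp y := exp_le_exp.2 (by linarith)
  rw [cosh_eq]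
  linarith

theorem div_rpow_mul_sqrt_mul_div_two_rpow {x lam : ℝ} (q : ℝ) (hx : 0 ≤ x) (hlam : 0 < lam) :
    (x / lam) ^ q * (√(lam * x) / 2) ^ (2 * q) = (x / 2) ^ (2 * q) := by
  rw [rpow_mul (by positivity), rpow_mul (by positivity), ← mul_rpow (by positivity)
    (by positivity)]
  congr 1
  simp only [rpow_two, div_pow, sq_sqrt (by positivity : 0 ≤ lam * x)]
  field_simp

theorem ContinuousOn.exists_isMaxOn_Ici {α β : Type*} [LinearOrder α] [TopologicalSpace α]
    [ClosedIciTopology α] [LinearOrder β] [TopologicalSpace β] [ClosedIciTopology β]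
    [CompactIccSpace β] {f : β → α} {a x₀ : β} (hf : ContinuousOn f (Ici a)) (hx₀ : a ≤ x₀)
    (hlim : ∀ᶠ x in atTop, f x ≤ f x₀) : ∃ x ∈ Ici a, IsMaxOn f (Ici a) x := by
  have : Nonempty β := ⟨a⟩
  obtain ⟨b, hb⟩ := eventually_atTop.1 hlim
  refine hf.exists_isMaxOn' isClosed_Ici hx₀ <|
    (hasBasis_cocompact.inf_principal _).eventually_iff.2 ⟨Icc a b, isCompact_Icc, ?_⟩
  rintro x ⟨hxK, hxa : a ≤ x⟩
  exact hb x (not_le.1 fun hxb => hxK ⟨hxa, hxb⟩).le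

noncomputable def besselITerm (ν y : ℝ) (m : ℕ) : ℝ :=
  (y / 2) ^ (2 * (m : ℝ) + ν) / (m ! * Gamma (m + ν + 1))

section besselI

variable {ν y : ℝ}

theorem besselI_eq_tsum : besselI ν y = ∑' m, besselITerm ν y m := rfl

theorem besselITerm_nonneg (hν : 0 ≤ ν) (hy : 0 ≤ y) (m : ℕ) : 0 ≤ besselITerm ν y m := by
  have := Gamma_pos_of_pos (by positivity : (0 : ℝ) < m + ν + 1)
  unfold besselITerm
  positivity

theorem besselITerm_le_besselITerm (hν : 0 ≤ ν) {z : ℝ} (hy : 0 ≤ y) (hyz : y ≤ z) (m : ℕ) :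
    besselITerm ν y m ≤ besselITerm ν z m := by
  have := Gamma_pos_of_pos (by positivity : (0 : ℝ) < m + ν + 1)
  unfold besselITerm
  gcongr

theorem besselITerm_le (hν : 0 ≤ ν) (hy : 0 < y) (m : ℕ) :
    besselITerm ν y m ≤ (y / 2) ^ ν / Gamma (ν + 1) * (y ^ (2 * m) / (2 * m)!) := by
  have hG := Gamma_pos_of_pos (by positivity : 0 < ν + 1)
  have hfact : ((2 * m)! : ℝ) * Gamma (ν + 1) ≤ 4 ^ m * (m ! * Gamma (m + ν + 1)) :=
    calc ((2 * m)! : ℝ) * Gamma (ν + 1) ≤ 4 ^ m * m ! ^ 2 * Gamma (ν + 1) := by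
          gcongr; exact_mod_cast Nat.factorial_two_mul_le_four_pow_mul_sq m
      _ = 4 ^ m * (m ! * (m ! * Gamma (ν + 1))) := by ring
      _ ≤ 4 ^ m * (m ! * Gamma (m + ν + 1)) := by
          gcongr; exact factorial_mul_Gamma_le_Gamma hν m
  have hpow : (y / 2) ^ (2 * (m : ℝ) + ν) = y ^ (2 * m) / 4 ^ m * (y / 2) ^ ν := by
    rw [show 2 * (m : ℝ) + ν = (2 * m : ℕ) + ν by push_cast; ring, rpow_add (by positivity),
      rpow_natCast, div_pow, pow_mul (2 : ℝ)]
    norm_num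
  have := Gamma_pos_of_pos (by positivity : (0 : ℝ) < m + ν + 1)
  calc besselITerm ν y m = y ^ (2 * m) * (y / 2) ^ ν / (4 ^ m * (m ! * Gamma (m + ν + 1))) := by
        rw [besselITerm, hpow]; ring
    _ ≤ y ^ (2 * m) * (y / 2) ^ ν / ((2 * m)! * Gamma (ν + 1)) := by gcongr
    _ = (y / 2) ^ ν / Gamma (ν + 1) * (y ^ (2 * m) / (2 * m)!) := by ring

theorem summable_besselITerm (hν : 0 ≤ ν) (hy : 0 < y) : Summable (besselITerm ν y) :=
  .of_nonneg_of_le (besselITerm_nonneg hν hy.le) (besselITerm_le hν hy)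
    ((hasSum_cosh y).summable.mul_left _)

theorem besselI_le (hν : 0 ≤ ν) (hy : 0 < y) :
    besselI ν y ≤ (y / 2) ^ ν / Gamma (ν + 1) * cosh y := by
  rw [besselI_eq_tsum, ← ((hasSum_cosh y).mul_left _).tsum_eq]
  exact (summable_besselITerm hν hy).tsum_le_tsum (besselITerm_le hν hy)
    ((hasSum_cosh y).summable.mul_left _)

theorem besselI_pos (hν : 0 ≤ ν) (hy : 0 < y) : 0 < besselI ν y := by
  have h0 : 0 < besselITerm ν y 0 := by
    have := Gamma_pos_of_pos (by positivity : 0 < ν + 1)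
    simp only [besselITerm, CharP.cast_eq_zero, mul_zero, zero_add, factorial_zero,
      Nat.cast_one, one_mul]
    positivity
  exact h0.trans_le <| (summable_besselITerm hν hy).le_tsum 0
    fun m _ => besselITerm_nonneg hν hy.le m

theorem continuousOn_besselI (hν : 0 ≤ ν) : ContinuousOn (besselI ν) (Ici 0) := by
  intro y (hy : 0 ≤ y)
  have hIcc : ContinuousOn (besselI ν) (Icc 0 (y + 1)) := by
    refine continuousOn_tsum (f := fun m z => besselITerm ν z m) (fun m => ?_)
      (summable_besselITerm hν (by linarith : 0 < y + 1)) fun m z hz => ?_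
    · exact ((continuous_id.div_const 2).rpow_const fun _ => Or.inr (by positivity)).continuousOn
        |>.div_const _
    · rw [Real.norm_of_nonneg (besselITerm_nonneg hν hz.1 m)]
      exact besselITerm_le_besselITerm hν hz.1 hz.2 m
  refine (hIcc y ⟨hy, by linarith⟩).mono_of_mem_nhdsWithin ?_
  rw [← Ici_inter_Iic]
  exact inter_mem_nhdsWithin _ (Iic_mem_nhds (by linarith))

end besselI

section ncchi

variable {k lam x : ℝ}

theorem continuous_ncchi (hk : 2 ≤ k) : Continuous (ncchi k lam) := by
  have hbessel : Continuous fun x => besselI ((k - 2) / 2) √(lam * x) :=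
    (continuousOn_besselI (by linarith)).comp_continuous (by fun_prop) fun _ => sqrt_nonneg _
  have hpow : Continuous fun x => (x / lam) ^ ((k - 2) / 4) :=
    (continuous_rpow_const (by linarith)).comp (continuous_id.div_const lam)
  unfold ncchi
  fun_prop

theorem ncchi_zero (hk : 2 < k) : ncchi k lam 0 = 0 := by
  simp [ncchi, zero_rpow (by linarith : (k - 2) / 4 ≠ 0)]

theorem ncchi_pos (hk : 2 ≤ k) (hlam : 0 < lam) (hx : 0 < x) : 0 < ncchi k lam x := by
  have := besselI_pos (by linarith : 0 ≤ (k - 2) / 2) (sqrt_pos.2 (mul_pos hlam hx))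
  unfold ncchi
  positivity

theorem ncchi_le (hk : 2 ≤ k) (hlam : 0 < lam) (hx : 0 < x) :
    ncchi k lam x ≤ exp (lam / 2) / (2 * Gamma ((k - 2) / 2 + 1)) *
      ((x / 2) ^ ((k - 2) / 2) * exp (-x / 4)) := by
  set q := (k - 2) / 4
  have hν : (k - 2) / 2 = 2 * q := by ring
  have hq : 0 ≤ q := by linarith
  set y := √(lam * x)
  have hy : 0 < y := sqrt_pos.2 (mul_pos hlam hx)
  have hG := Gamma_pos_of_pos (by positivity : 0 < 2 * q + 1)
  have amgm : y ≤ x / 4 + lam :=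
    sqrt_le_iff.2 ⟨by positivity, by nlinarith [sq_nonneg (x / 4 - lam)]⟩
  rw [ncchi, hν]
  calc 1 / 2 * exp (-(x + lam) / 2) * (x / lam) ^ q * besselI (2 * q) y
      ≤ 1 / 2 * exp (-(x + lam) / 2) * (x / lam) ^ q *
          ((y / 2) ^ (2 * q) / Gamma (2 * q + 1) * exp y) := by
        gcongr
        exact (besselI_le (by positivity) hy).trans (by gcongr; exact cosh_le_exp hy.le)
    _ = exp (-(x + lam) / 2 + y) / (2 * Gamma (2 * q + 1)) *
          ((x / lam) ^ q * (y / 2) ^ (2 * q)) := by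
        rw [exp_add]; ring
    _ ≤ exp (lam / 2 + -x / 4) / (2 * Gamma (2 * q + 1)) * (x / 2) ^ (2 * q) := by
        rw [div_rpow_mul_sqrt_mul_div_two_rpow q hx.le hlam]
        gcongr exp ?_ / _ * _
        linarith
    _ = _ := by rw [exp_add]; ring

theorem tendsto_ncchi_atTop (hk : 2 ≤ k) (hlam : 0 < lam) :
    Tendsto (ncchi k lam) atTop (𝓝 0) := by
  have hdecay : Tendsto (fun x => (x / 2) ^ ((k - 2) / 2) * exp (-x / 4)) atTop (𝓝 0) := by
    refine ((tendsto_rpow_mul_exp_neg_mul_atTop_nhds_zero ((k - 2) / 2) (1 / 2) one_half_pos).comp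
      (tendsto_id.atTop_div_const two_pos)).congr fun x => ?_
    simp only [Function.comp_apply, id]
    ring_nf
  refine squeeze_zero' ?_ ?_ <| by
    simpa using hdecay.const_mul (exp (lam / 2) / (2 * Gamma ((k - 2) / 2 + 1)))
  · filter_upwards [eventually_gt_atTop 0] with x hx using (ncchi_pos hk hlam hx).le
  · filter_upwards [eventually_gt_atTop 0] with x hx using ncchi_le hk hlam hx

end ncchi

theorem stmt_14 (k lam : ℝ) (hk : 2 < k) (hlam : 0 < lam) :
    ∃ xm : ℝ, 0 < xm ∧ ∀ x : ℝ, 0 < x → ncchi k lam x ≤ ncchi k lam xm := by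
  have hpos : 0 < ncchi k lam 1 := ncchi_pos hk.le hlam one_pos
  obtain ⟨xm, hxm, hmax⟩ := (continuous_ncchi hk.le).continuousOn.exists_isMaxOn_Ici
    zero_le_one (((tendsto_ncchi_atTop hk.le hlam).eventually_lt_const hpos).mono fun _ => le_of_lt)
  have hxm0 : xm ≠ 0 := by
    rintro rfl
    have : ncchi k lam 1 ≤ ncchi k lam 0 := hmax (mem_Ici.2 zero_le_one)
    rw [ncchi_zero hk] at this
    linarith
  exact ⟨xm, (mem_Ici.1 hxm).lt_of_ne' hxm0, fun x hx => hmax (mem_Ici.2 hx.le)⟩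
end
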